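/- Let X be a finite pure k-dimensional simplicial complex (k ≥ 1) such that every (k−1)-simplex of X is contained in exactly m k-simplices of X. Then for every φ ∈ C^{k−1}(X): ‖d_{k−1}φ‖_X² = Σ_{τ ∈ X(k−2)} ‖d_0 φ_τ‖_{lk(X,τ)}² − m(k−1)·‖φ‖_X², where for τ ∈ X(k−2) the 0-cochain φ_τ on the link lk(X,τ) is defined by φ_τ(v) = φ(vτ) (vτ denotes the concatenation of the vertex v with the ordered simplex τ). -/

import Mathlib

open Finset

namespace BCC

/-! ### Simplicial cochain machinery.

A finite simplicial complex on a linearly ordered finite vertex type `V` is encoded as a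
`Finset (Finset V)` of faces (downward closure is assumed as a hypothesis where needed;
the empty face plays the role of the `(-1)`-dimensional simplex, so that the cochain
complex below is the *augmented* (reduced) one).

A skew-symmetric real-valued function on ordered `j`-simplices is determined by its values
on the increasingly-ordered simplices, so `C^j(X)` is encoded as the space of real functions
on the faces of cardinality `j+1`.  Thus `Cochain X m` is `C^{m-1}(X)`, and `d X m` is the
coboundary `d_{m-1} : C^{m-1}(X) → C^m(X)`; in particular `d X 0` is the augmentation
`d_{-1} : C^{-1}(X) = ℝ → C^0(X)`, `(d_{-1} a)(v) = a`.  `dStar X m` is the adjoint of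
`d X m` with respect to the standard inner products `(φ, ψ) = ∑_{σ ∈ X(j)} φ(σ)ψ(σ)`,
written out explicitly. -/

/-- `C^{m-1}(X)`: real cochains supported on the faces of cardinality `m`. -/
abbrev Cochain {V : Type*} [Fintype V] [LinearOrder V] (X : Finset (Finset V)) (m : ℕ) :
    Type _ :=
  {s : Finset V // s ∈ X ∧ s.card = m} → ℝ

section Ordered
variable {V : Type*} [Fintype V] [LinearOrder V]

/-- The sign `(-1)^i` of the vertex `v` in the increasingly ordered simplex `σ`,
where `i` is the position of `v` in `σ`. -/
noncomputable def sgn (σ : Finset V) (v : V) : ℝ :=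
  (-1 : ℝ) ^ (σ.filter fun w => w < v).card

/-- The simplicial coboundary `d_{m-1} : C^{m-1}(X) → C^m(X)`,
`(dφ)(σ) = ∑_{i} (-1)^i φ(σ_i)`. -/
noncomputable def d (X : Finset (Finset V)) (m : ℕ) :
    Cochain X m →ₗ[ℝ] Cochain X (m + 1) where
  toFun φ := fun σ => ∑ v ∈ σ.1, sgn σ.1 v *
    (if h : σ.1.erase v ∈ X ∧ (σ.1.erase v).card = m then φ ⟨σ.1.erase v, h⟩ else 0)
  map_add' φ ψ := by
    funext σ
    show (∑ v ∈ σ.1, (_ : ℝ)) = (∑ v ∈ σ.1, (_ : ℝ)) + (∑ v ∈ σ.1, (_ : ℝ))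
    rw [← Finset.sum_add_distrib]
    refine Finset.sum_congr rfl fun v hv => ?_
    split
    · show sgn σ.1 v * (φ _ + ψ _) = _; ring
    · ring
  map_smul' c φ := by
    funext σ
    show (∑ v ∈ σ.1, _) = c * (∑ v ∈ σ.1, _)
    rw [Finset.mul_sum]
    refine Finset.sum_congr rfl fun v hv => ?_
    split
    · show sgn σ.1 v * (c * φ _) = _; ring
    · ring

/-- The adjoint `d_{m-1}^* : C^m(X) → C^{m-1}(X)` of the coboundary `d X m` with respect to
the standard inner products, written out explicitly:
`(d^*ψ)(τ) = ∑_{v ∉ τ, τ ∪ {v} ∈ X} ± ψ(τ ∪ {v})`. -/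
noncomputable def dStar (X : Finset (Finset V)) (m : ℕ) :
    Cochain X (m + 1) →ₗ[ℝ] Cochain X m where
  toFun ψ := fun τ => ∑ v ∈ τ.1ᶜ, sgn (insert v τ.1) v *
    (if h : insert v τ.1 ∈ X ∧ (insert v τ.1).card = m + 1 then ψ ⟨insert v τ.1, h⟩ else 0)
  map_add' φ ψ := by
    funext τ
    show (∑ v ∈ τ.1ᶜ, (_ : ℝ)) = (∑ v ∈ τ.1ᶜ, (_ : ℝ)) + (∑ v ∈ τ.1ᶜ, (_ : ℝ))
    rw [← Finset.sum_add_distrib]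
    refine Finset.sum_congr rfl fun v hv => ?_
    split
    · show sgn _ v * (φ _ + ψ _) = _; ring
    · ring
  map_smul' c φ := by
    funext τ
    show (∑ v ∈ τ.1ᶜ, _) = c * (∑ v ∈ τ.1ᶜ, _)
    rw [Finset.mul_sum]
    refine Finset.sum_congr rfl fun v hv => ?_
    split
    · show sgn _ v * (c * φ _) = _; ring
    · ring

/-- The squared norm `‖φ‖² = ∑_{σ ∈ X(j)} φ(σ)²` of a cochain. -/
noncomputable def normSq {X : Finset (Finset V)} {m : ℕ} (φ : Cochain X m) : ℝ :=
  ∑ s, φ s ^ 2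

/-- The reduced `m`-th Laplacian `L_m = d_{m-1} d_{m-1}^* + d_m^* d_m`
acting on `C^m(X) = Cochain X (m+1)`. -/
noncomputable def Lap (X : Finset (Finset V)) (m : ℕ) :
    Cochain X (m + 1) →ₗ[ℝ] Cochain X (m + 1) :=
  (d X m) ∘ₗ (dStar X m) + (dStar X (m + 1)) ∘ₗ (d X (m + 1))

/-- The `m`-th spectral gap `μ_m(X)`: the minimal eigenvalue of the reduced `m`-th
Laplacian `L_m` acting on `C^m(X)`. -/
noncomputable def mu (X : Finset (Finset V)) (m : ℕ) : ℝ :=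
  sInf {μ : ℝ | Module.End.HasEigenvalue (Lap X m) μ}

/-- The dimension of the `j`-th reduced real cohomology `H̃^j(X;ℝ) = ker d_j / im d_{j-1}`
of the augmented cochain complex of `X`. -/
noncomputable def cohomDim (X : Finset (Finset V)) (j : ℕ) : ℕ :=
  Module.finrank ℝ
    (↥(LinearMap.ker (d X (j + 1))) ⧸
      (LinearMap.range (d X j)).comap (LinearMap.ker (d X (j + 1))).subtype)

/-! ### Links and `λ₂` of link graphs -/

/-- The vertex set of the link `lk(X,τ)` of the face `τ`. -/
def linkVerts (X : Finset (Finset V)) (τ : Finset V) : Finset V :=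
  univ.filter (fun v => v ∉ τ ∧ insert v τ ∈ X)

/-- The Dirichlet energy `‖d₀ f‖² = ∑_{{u,v} ∈ lk(X,τ)(1)} (f v - f u)²` of a function `f`
on the vertices of the link graph `lk(X,τ)` (each unordered edge counted once). -/
noncomputable def linkEnergy (X : Finset (Finset V)) (τ : Finset V) (f : V → ℝ) : ℝ :=
  (1 / 2) * ∑ u : V, ∑ v : V,
    if u ≠ v ∧ u ∉ τ ∧ v ∉ τ ∧ insert u (insert v τ) ∈ X then (f v - f u) ^ 2 else 0

/-- The second smallest eigenvalue `λ₂` of the Laplacian of the link graph `lk(X,τ)`,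
via its variational characterization: the infimum of the Rayleigh quotients
`‖d₀ f‖²/‖f‖²` over nonzero functions `f` on the link vertices with `∑_v f(v) = 0`. -/
noncomputable def linkLambda2 (X : Finset (Finset V)) (τ : Finset V) : ℝ :=
  sInf {r : ℝ | ∃ f : V → ℝ, (∀ v, v ∉ linkVerts X τ → f v = 0) ∧ (∑ v, f v) = 0 ∧
    f ≠ 0 ∧ r = linkEnergy X τ f / ∑ v, f v ^ 2}

/-- The localization `φ_τ` of a cochain `φ ∈ C^{m-1}(X)` to the link of a face `τ` with
`|τ| = m - 1` : `φ_τ(v) = φ(vτ)` (expressed through the chosen increasing orientations). -/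
noncomputable def restrictLink (X : Finset (Finset V)) {m : ℕ} (φ : Cochain X m)
    (τ : Finset V) : V → ℝ :=
  fun v => if h : v ∉ τ ∧ insert v τ ∈ X ∧ (insert v τ).card = m then
    sgn (insert v τ) v * φ ⟨insert v τ, h.2.1, h.2.2⟩ else 0

end Ordered

section Graphs
variable {V : Type*} [DecidableEq V]

/-- The link `lk(X,τ)` of a codimension-2 face, as a simple graph on its vertex set. -/
def linkGraph (X : Finset (Finset V)) (τ : Finset V) :
    SimpleGraph {v : V // v ∉ τ ∧ insert v τ ∈ X} where
  Adj u v := u ≠ v ∧ insert u.1 (insert v.1 τ) ∈ X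
  symm := ⟨by
    rintro u v ⟨h1, h2⟩
    exact ⟨h1.symm, by rwa [Finset.insert_comm] at h2⟩⟩
  loopless := ⟨fun u h => h.1 rfl⟩

/-- The bipartite Cayley graph `C_A` on `{1,2} × G` (encoded as `Fin 2 × G`), with an edge
between `(1,x₁)` and `(2,x₂)` whenever `x₁ x₂ ∈ A`. -/
def cayleyGraph (G : Type*) [Group G] [DecidableEq G] (A : Finset G) :
    SimpleGraph (Fin 2 × G) where
  Adj u v := (u.1 = 0 ∧ v.1 = 1 ∧ u.2 * v.2 ∈ A) ∨ (v.1 = 0 ∧ u.1 = 1 ∧ v.2 * u.2 ∈ A)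
  symm := by tauto
  loopless := ⟨by
    rintro ⟨i, x⟩ (⟨h0, h1, -⟩ | ⟨h0, h1, -⟩) <;> rw [h0] at h1 <;> exact absurd h1 (by decide)⟩

/-- The disjoint union of `ℓ` copies of a graph `H`. -/
def copies (ℓ : ℕ) {α : Type*} (H : SimpleGraph α) : SimpleGraph (Fin ℓ × α) where
  Adj u v := u.1 = v.1 ∧ H.Adj u.2 v.2
  symm := ⟨by rintro u v ⟨h1, h2⟩; exact ⟨h1.symm, h2.symm⟩⟩
  loopless := ⟨fun u h => H.loopless.irrefl u.2 h.2⟩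

end Graphs

/-! ### The complexes `Y_{G,k}` and `Y_{A,k}` -/

/-- The balanced complex `Y_{G,k}`, i.e. the simplicial join `V_1 * ⋯ * V_{k+1}` where
`V_i = {i} × G`: its faces are exactly the subsets of `Fin (k+1) × G` containing at most one
vertex of each colour `i : Fin (k+1)`. -/
def YG (G : Type*) [Fintype G] [DecidableEq G] (k : ℕ) :
    Finset (Finset (Fin (k + 1) × G)) :=
  (univ : Finset (Finset (Fin (k + 1) × G))).filter
    (fun s => ∀ x ∈ s, ∀ y ∈ s, Prod.fst x = Prod.fst y → x = y)

/-- The balanced `k`-dimensional Cayley complex `Y_{A,k}`: the full `(k-1)`-skeleton of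
`Y_{G,k}` together with all `k`-simplices `{(1,x_1),…,(k+1,x_{k+1})}` such that
`x_1 ⋯ x_{k+1} ∈ A` (the ordered product is taken along the colours `1,…,k+1`). -/
def YA (G : Type*) [Group G] [Fintype G] [DecidableEq G] (k : ℕ) (A : Finset G) :
    Finset (Finset (Fin (k + 1) × G)) :=
  (YG G k).filter (fun s => s.card ≤ k ∨
    ∃ x : Fin (k + 1) → G, s = univ.image (fun i => (i, x i)) ∧ (List.ofFn x).prod ∈ A)

/-! ### Unitary representations, `ν(A)` and `D(G)` -/

variable {G : Type*} [Group G]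

/-- A unitary matrix representation `ρ : G → U(d)` is irreducible if `d > 0` and the only
invariant subspaces of `ℂ^d` are `⊥` and `⊤`. -/
def IsIrred {d : ℕ} (ρ : G →* Matrix.unitaryGroup (Fin d) ℂ) : Prop :=
  0 < d ∧ ∀ W : Submodule ℂ (EuclideanSpace ℂ (Fin d)),
    (∀ g : G, ∀ v ∈ W, Matrix.toEuclideanLin (ρ g : Matrix (Fin d) (Fin d) ℂ) v ∈ W) →
      W = ⊥ ∨ W = ⊤

/-- A matrix representation is nontrivial if it is not identically the identity. -/
def IsNontrivialRep {d : ℕ} (ρ : G →* Matrix.unitaryGroup (Fin d) ℂ) : Prop :=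
  ∃ g : G, (ρ g : Matrix (Fin d) (Fin d) ℂ) ≠ 1

/-- The operator (spectral) norm of a complex `d × d` matrix. -/
noncomputable def opNorm {d : ℕ} (M : Matrix (Fin d) (Fin d) ℂ) : ℝ :=
  ‖Matrix.toEuclideanCLM (𝕜 := ℂ) M‖

/-- The Fourier transform `1̂_A(ρ) = ∑_{x ∈ A} ρ(x)` of the indicator of `A` at `ρ`. -/
noncomputable def fourier {d : ℕ} (ρ : G →* Matrix.unitaryGroup (Fin d) ℂ) (A : Finset G) :
    Matrix (Fin d) (Fin d) ℂ :=
  ∑ a ∈ A, (ρ a : Matrix (Fin d) (Fin d) ℂ)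

/-- `ν(A) = max_{ρ ∈ Ĝ₊} ‖1̂_A(ρ)‖`: the supremum of the operator norms `‖∑_{x ∈ A} ρ(x)‖`
over all nontrivial irreducible unitary matrix representations of `G` (this agrees with the
maximum over any complete set `Ĝ₊` of pairwise inequivalent nontrivial irreducible unitary
representations, since equivalent irreducible unitary representations are unitarily
equivalent and hence give the same norm). -/
noncomputable def nu (G : Type*) [Group G] (A : Finset G) : ℝ :=
  sSup {x : ℝ | ∃ (d : ℕ) (ρ : G →* Matrix.unitaryGroup (Fin d) ℂ),
    IsIrred ρ ∧ IsNontrivialRep ρ ∧ x = opNorm (fourier ρ A)}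

/-- Equivalence of two unitary matrix representations: an invertible intertwiner. -/
def RepEquiv {d₁ d₂ : ℕ} (ρ₁ : G →* Matrix.unitaryGroup (Fin d₁) ℂ)
    (ρ₂ : G →* Matrix.unitaryGroup (Fin d₂) ℂ) : Prop :=
  ∃ T : Matrix (Fin d₂) (Fin d₁) ℂ, Function.Bijective T.mulVecLin ∧
    ∀ g : G, T * (ρ₁ g : Matrix (Fin d₁) (Fin d₁) ℂ) = (ρ₂ g : Matrix (Fin d₂) (Fin d₂) ℂ) * T

/-- `(dims, ρs)` is a complete family of irreducible unitary representations of `G`: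
each member is irreducible, they are pairwise inequivalent, and every irreducible unitary
matrix representation of `G` is equivalent to some member.  Such a family realizes `Ĝ`,
and the sum of the degrees of the irreducible representations is `D(G) = ∑ i, dims i`. -/
def IsCompleteIrrepFamily (G : Type*) [Group G] {ι : Type} (dims : ι → ℕ)
    (ρs : ∀ i : ι, G →* Matrix.unitaryGroup (Fin (dims i)) ℂ) : Prop :=
  (∀ i, IsIrred (ρs i)) ∧
  (∀ i j, i ≠ j → ¬ RepEquiv (ρs i) (ρs j)) ∧
  (∀ (d : ℕ) (π : G →* Matrix.unitaryGroup (Fin d) ℂ), IsIrred π → ∃ i, RepEquiv π (ρs i))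

end BCC

open BCC

/-
Expanding `‖dφ‖² = ∑_σ (∑_{v ∈ σ} ±φ(σ ∖ v))²`, the diagonal terms give `m‖φ‖²`, because every
`(k-1)`-face lies in exactly `m` top faces.  In an off-diagonal term the top face is `σ = uvτ` and
the two faces `uτ`, `vτ` enter with opposite relative signs, so these terms add up to
`-∑_τ ∑_{u ∼ v} φ_τ(u) φ_τ(v)`, the adjacency taken in `lk(X,τ)`.  On the other hand every link
graph is `m`-regular on the support of `φ_τ`, so its Laplacian quadratic form is
`‖d₀φ_τ‖² = m‖φ_τ‖² - ∑_{u ∼ v} φ_τ(u) φ_τ(v)`, and `∑_τ ‖φ_τ‖² = k‖φ‖²` since each `(k-1)`-face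
has `k` facets.  Subtracting the two identities gives the claim.
-/

namespace BCC

lemma sq_sum_eq_sum_sq_add_sum_sum_erase {ι R : Type*} [DecidableEq ι] [CommSemiring R]
    (s : Finset ι) (a : ι → R) :
    (∑ i ∈ s, a i) ^ 2 = ∑ i ∈ s, a i ^ 2 + ∑ i ∈ s, ∑ j ∈ s.erase i, a i * a j := by
  rw [sq, sum_mul_sum, ← sum_add_distrib]
  refine sum_congr rfl fun i hi => ?_
  rw [← add_sum_erase s _ hi, sq]

variable {V : Type*} [LinearOrder V]

lemma sgn_mul_self (σ : Finset V) (v : V) : sgn σ v * sgn σ v = 1 := by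
  rw [sgn, ← pow_add, Even.neg_one_pow ⟨_, rfl⟩]

lemma sgn_insert_self (σ : Finset V) (v : V) : sgn (insert v σ) v = sgn σ v := by
  rw [sgn, sgn, filter_insert, if_neg (lt_irrefl v)]

lemma sgn_insert {σ : Finset V} {w : V} (hw : w ∉ σ) (v : V) :
    sgn (insert w σ) v = (if w < v then -1 else 1) * sgn σ v := by
  rw [sgn, sgn, filter_insert]
  split_ifs with h
  · rw [card_insert_of_notMem fun hmem => hw (mem_filter.1 hmem).1, pow_succ, mul_comm]
  · rw [one_mul]

lemma sgn_insert_insert_mul {τ : Finset V} {u v : V} (hu : u ∉ τ) (hv : v ∉ τ) (huv : u ≠ v) :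
    sgn (insert u (insert v τ)) u * sgn (insert u (insert v τ)) v
      = -(sgn (insert u τ) u * sgn (insert v τ) v) := by
  have hu' : u ∉ insert v τ := by simp [huv, hu]
  rw [sgn_insert_self, sgn_insert hu', sgn_insert hv, sgn_insert_self, sgn_insert_self]
  rcases huv.lt_or_gt with h | h
  · rw [if_neg h.not_gt, if_pos h]; ring
  · rw [if_pos h, if_neg h.not_gt]; ring

variable [Fintype V]

/-- Extension by zero to all of `Finset V`, so that sums over faces can be reindexed through
`insert` and `erase`. -/
noncomputable def Cochain.extend {X : Finset (Finset V)} {n : ℕ} (φ : Cochain X n)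
    (s : Finset V) : ℝ :=
  if h : s ∈ X ∧ s.card = n then φ ⟨s, h⟩ else 0

section Cochain
variable {X : Finset (Finset V)} {n : ℕ} (φ : Cochain X n)

lemma Cochain.extend_of_notMem {s : Finset V} (hs : s ∉ X) : φ.extend s = 0 :=
  dif_neg fun h => hs h.1

lemma normSq_eq_sum_extend : normSq φ = ∑ s ∈ X.filter (·.card = n), φ.extend s ^ 2 := by
  rw [sum_subtype (p := fun s => s ∈ X ∧ s.card = n) _ (fun s => mem_filter)]
  refine sum_congr rfl fun s _ => ?_
  rw [Cochain.extend, dif_pos s.2]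

lemma extend_d_apply {σ : Finset V} (hσ : σ ∈ X.filter (·.card = n + 1)) :
    (d X n φ).extend σ = ∑ v ∈ σ, sgn σ v * φ.extend (σ.erase v) := by
  rw [Cochain.extend, dif_pos (mem_filter.1 hσ)]
  rfl

lemma restrictLink_eq (τ : Finset V) (v : V) :
    restrictLink X φ τ v = if v ∈ τ then 0 else sgn (insert v τ) v * φ.extend (insert v τ) := by
  unfold restrictLink Cochain.extend
  by_cases hv : v ∈ τ
  · simp [hv]
  · by_cases h : insert v τ ∈ X ∧ (insert v τ).card = n
    · simp [hv, h]
    · rw [dif_neg (by tauto), if_neg hv, dif_neg h, mul_zero]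

lemma sum_sq_restrictLink (τ : Finset V) :
    ∑ v, restrictLink X φ τ v ^ 2 = ∑ v ∈ linkVerts X τ, φ.extend (insert v τ) ^ 2 := by
  rw [linkVerts, sum_filter]
  refine sum_congr rfl fun v _ => ?_
  rw [restrictLink_eq]
  by_cases hv : v ∈ τ
  · simp [hv]
  · by_cases hX : insert v τ ∈ X
    · rw [if_neg hv, if_pos ⟨hv, hX⟩, mul_pow, sq (sgn _ _), sgn_mul_self, one_mul]
    · rw [if_neg hv, if_neg (by tauto), φ.extend_of_notMem hX, mul_zero, zero_pow two_ne_zero]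

end Cochain

section Faces
variable {X : Finset (Finset V)}

lemma card_linkVerts (τ : Finset V) :
    (linkVerts X τ).card = (X.filter fun η => τ ⊆ η ∧ η.card = τ.card + 1).card := by
  refine card_nbij (insert · τ) (fun w hw => ?_) (fun w hw w' _ h => ?_) fun η hη => ?_
  · obtain ⟨hwτ, hwX⟩ := (mem_filter.1 hw).2
    exact mem_filter.2 ⟨hwX, subset_insert w τ, card_insert_of_notMem hwτ⟩
  · exact (insert_inj (mem_filter.1 hw).2.1).1 h
  · obtain ⟨hηX, hτη, hcard⟩ := mem_filter.1 hη
    obtain ⟨w, hwτ, rfl⟩ := exists_eq_insert_iff.2 ⟨hτη, hcard.symm⟩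
    exact ⟨w, mem_filter.2 ⟨mem_univ w, hwτ, hηX⟩, rfl⟩

variable (hdc : ∀ s ∈ X, ∀ t ⊆ s, t ∈ X)
include hdc

lemma sum_sum_mem_eq_sum_sum_linkVerts {β : Type*} [AddCommMonoid β] (n : ℕ)
    (H : Finset V → V → β) :
    ∑ σ ∈ X.filter (·.card = n + 1), ∑ v ∈ σ, H σ v
      = ∑ τ ∈ X.filter (·.card = n), ∑ v ∈ linkVerts X τ, H (insert v τ) v := by
  rw [sum_sigma', sum_sigma']
  refine sum_nbij' (fun p => ⟨p.1.erase p.2, p.2⟩) (fun p => ⟨insert p.2 p.1, p.2⟩)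
    ?_ ?_ ?_ ?_ ?_
  · rintro ⟨σ, v⟩ hp
    simp only [mem_sigma, mem_filter] at hp ⊢
    obtain ⟨⟨hσX, hσc⟩, hv⟩ := hp
    refine ⟨⟨hdc σ hσX _ (erase_subset _ _), by rw [card_erase_of_mem hv, hσc]; rfl⟩,
      mem_filter.2 ⟨mem_univ v, notMem_erase _ _, by rwa [insert_erase hv]⟩⟩
  · rintro ⟨τ, v⟩ hp
    simp only [mem_sigma, mem_filter, linkVerts, mem_univ, true_and] at hp ⊢
    obtain ⟨⟨-, hτc⟩, hvτ, hX⟩ := hp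
    exact ⟨⟨hX, by rw [card_insert_of_notMem hvτ, hτc]⟩, mem_insert_self _ _⟩
  · rintro ⟨σ, v⟩ hp
    simp only [mem_sigma] at hp
    simp only [insert_erase hp.2]
  · rintro ⟨τ, v⟩ hp
    simp only [mem_sigma, linkVerts, mem_filter] at hp
    simp only [erase_insert hp.2.2.1]
  · rintro ⟨σ, v⟩ hp
    simp only [mem_sigma] at hp
    simp only [insert_erase hp.2]

lemma sum_sum_sum_erase_eq_sum_sum_linkVerts {β : Type*} [AddCommMonoid β] (n : ℕ)
    (H : Finset V → V → V → β) :
    ∑ σ ∈ X.filter (·.card = n + 1 + 1), ∑ u ∈ σ, ∑ v ∈ σ.erase u, H σ u v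
      = ∑ τ ∈ X.filter (·.card = n), ∑ v ∈ linkVerts X τ, ∑ u ∈ linkVerts X (insert v τ),
          H (insert u (insert v τ)) u v := by
  rw [sum_sum_mem_eq_sum_sum_linkVerts hdc (n + 1),
    ← sum_sum_mem_eq_sum_sum_linkVerts hdc n fun ρ v => ∑ u ∈ linkVerts X ρ, H (insert u ρ) u v]
  refine sum_congr rfl fun ρ _ => ?_
  rw [sum_comm]
  refine sum_congr rfl fun u hu => ?_
  rw [erase_insert (mem_filter.1 hu).2.1]

end Faces

section LinkGraph
variable (X : Finset (Finset V)) (τ : Finset V)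

/-- `linkGraph X τ` with all of `V` as vertex set, the vertices outside the link being isolated;
its adjacency is the condition summed over in `linkEnergy`. -/
def linkGraph' : SimpleGraph V where
  Adj u v := u ≠ v ∧ u ∉ τ ∧ v ∉ τ ∧ insert u (insert v τ) ∈ X
  symm := ⟨fun _ _ ⟨huv, hu, hv, hX⟩ => ⟨huv.symm, hv, hu, by rwa [insert_comm]⟩⟩
  loopless := ⟨fun _ h => h.1 rfl⟩

instance : DecidableRel (linkGraph' X τ).Adj := fun u v =>
  inferInstanceAs (Decidable (u ≠ v ∧ u ∉ τ ∧ v ∉ τ ∧ insert u (insert v τ) ∈ X))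

noncomputable def linkAdjForm (f : V → ℝ) : ℝ :=
  ∑ u, ∑ v, if (linkGraph' X τ).Adj u v then f u * f v else 0

lemma linkEnergy_eq (f : V → ℝ) :
    linkEnergy X τ f = ∑ v, (linkGraph' X τ).degree v * f v ^ 2 - linkAdjForm X τ f := by
  have h := (linkGraph' X τ).lapMatrix_toLinearMap₂' ℝ f
  rw [Matrix.toLinearMap₂'_apply', SimpleGraph.lapMatrix, Matrix.sub_mulVec, dotProduct_sub,
    SimpleGraph.dotProduct_mulVec_degMatrix, SimpleGraph.dotProduct_mulVec_adjMatrix] at h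
  simp only [mul_assoc, ← sq] at h
  rw [linkAdjForm, h, linkEnergy, one_div_mul_eq_div]
  congr 1
  refine sum_congr rfl fun u _ => sum_congr rfl fun v _ => ?_
  rw [sub_sq_comm]
  rfl

lemma degree_linkGraph' {v : V} (hv : v ∉ τ) :
    (linkGraph' X τ).degree v = (linkVerts X (insert v τ)).card := by
  rw [← SimpleGraph.card_neighborFinset_eq_degree]
  congr 1
  ext u
  rw [SimpleGraph.mem_neighborFinset, linkVerts, mem_filter, insert_comm]
  simp only [linkGraph', mem_univ, true_and, mem_insert]
  constructor
  · rintro ⟨hvu, -, huτ, hX⟩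
    exact ⟨by rintro (h | h); exacts [hvu h.symm, huτ h], hX⟩
  · rintro ⟨hu, hX⟩
    exact ⟨fun h => hu (Or.inl h.symm), hv, fun h => hu (Or.inr h), hX⟩

lemma sum_linkVerts_linkVerts_eq_sum_adj (hdc : ∀ s ∈ X, ∀ t ⊆ s, t ∈ X) (g : V → V → ℝ) :
    ∑ v ∈ linkVerts X τ, ∑ u ∈ linkVerts X (insert v τ), g u v
      = ∑ u, ∑ v, if (linkGraph' X τ).Adj u v then g u v else 0 := by
  have hadj : ∀ u v,
      (linkGraph' X τ).Adj u v ↔ v ∈ linkVerts X τ ∧ u ∈ linkVerts X (insert v τ) := by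
    intro u v
    simp only [linkGraph', linkVerts, mem_filter, mem_univ, true_and, mem_insert, not_or]
    exact ⟨fun ⟨huv, hu, hv, hX⟩ => ⟨⟨hv, hdc _ hX _ (subset_insert _ _)⟩, ⟨huv, hu⟩, hX⟩,
      fun ⟨⟨hv, _⟩, ⟨huv, hu⟩, hX⟩ => ⟨huv, hu, hv, hX⟩⟩
  simp only [hadj, ite_and]
  rw [sum_comm]
  simp only [← ite_sum_zero, sum_ite_mem, univ_inter]

end LinkGraph

section Garland
variable {X : Finset (Finset V)} (hdc : ∀ s ∈ X, ∀ t ⊆ s, t ∈ X) {n m : ℕ}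
  (hreg : ∀ σ ∈ X, σ.card = n + 1 → (linkVerts X σ).card = m) (φ : Cochain X (n + 1))
include hdc

lemma sum_sum_sq_restrictLink :
    ∑ τ ∈ X.filter (·.card = n), ∑ v, restrictLink X φ τ v ^ 2 = (n + 1) * normSq φ := by
  simp only [sum_sq_restrictLink]
  rw [← sum_sum_mem_eq_sum_sum_linkVerts hdc n fun σ _ => φ.extend σ ^ 2,
    normSq_eq_sum_extend, mul_sum]
  refine sum_congr rfl fun σ hσ => ?_
  rw [sum_const, (mem_filter.1 hσ).2, nsmul_eq_mul]
  push_cast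
  ring

lemma sum_sum_sum_erase_sgn_mul_eq_neg_sum_linkAdjForm :
    ∑ σ ∈ X.filter (·.card = n + 1 + 1), ∑ u ∈ σ, ∑ v ∈ σ.erase u,
        sgn σ u * φ.extend (σ.erase u) * (sgn σ v * φ.extend (σ.erase v))
      = -∑ τ ∈ X.filter (·.card = n), linkAdjForm X τ (restrictLink X φ τ) := by
  rw [sum_sum_sum_erase_eq_sum_sum_linkVerts hdc, ← sum_neg_distrib]
  refine sum_congr rfl fun τ _ => ?_
  rw [linkAdjForm, ← sum_linkVerts_linkVerts_eq_sum_adj X τ hdc, ← sum_neg_distrib]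
  refine sum_congr rfl fun v hv => ?_
  rw [← sum_neg_distrib]
  refine sum_congr rfl fun u hu => ?_
  have hvτ : v ∉ τ := (mem_filter.1 hv).2.1
  have huvτ : u ∉ insert v τ := (mem_filter.1 hu).2.1
  have huτ : u ∉ τ := fun h => huvτ (mem_insert_of_mem h)
  have huv : u ≠ v := fun h => huvτ (h ▸ mem_insert_self u τ)
  rw [erase_insert huvτ, insert_comm, erase_insert (by simpa [huv.symm] using hvτ), insert_comm,
    restrictLink_eq, restrictLink_eq, if_neg huτ, if_neg hvτ]
  linear_combination φ.extend (insert v τ) * φ.extend (insert u τ) *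
    sgn_insert_insert_mul huτ hvτ huv

include hreg

lemma sum_sum_sq_extend_erase :
    ∑ σ ∈ X.filter (·.card = n + 1 + 1), ∑ v ∈ σ, φ.extend (σ.erase v) ^ 2
      = m * normSq φ := by
  rw [sum_sum_mem_eq_sum_sum_linkVerts hdc, normSq_eq_sum_extend, mul_sum]
  refine sum_congr rfl fun τ hτ => ?_
  obtain ⟨hτX, hτc⟩ := mem_filter.1 hτ
  rw [sum_congr rfl fun v hv => by rw [erase_insert (mem_filter.1 hv).2.1], sum_const,
    hreg τ hτX hτc, nsmul_eq_mul]

lemma normSq_d_eq :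
    normSq (d X (n + 1) φ)
      = m * normSq φ - ∑ τ ∈ X.filter (·.card = n), linkAdjForm X τ (restrictLink X φ τ) := by
  rw [normSq_eq_sum_extend, sum_congr rfl fun σ hσ => by
      rw [extend_d_apply _ hσ, sq_sum_eq_sum_sq_add_sum_sum_erase], sum_add_distrib,
    sum_sum_sum_erase_sgn_mul_eq_neg_sum_linkAdjForm hdc, ← sum_sum_sq_extend_erase hdc hreg,
    sub_eq_add_neg]
  congr 1
  refine sum_congr rfl fun σ _ => sum_congr rfl fun v _ => ?_
  rw [mul_pow, sq (sgn σ v), sgn_mul_self, one_mul]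

lemma sum_linkEnergy_restrictLink :
    ∑ τ ∈ X.filter (·.card = n), linkEnergy X τ (restrictLink X φ τ)
      = m * ((n + 1) * normSq φ)
        - ∑ τ ∈ X.filter (·.card = n), linkAdjForm X τ (restrictLink X φ τ) := by
  rw [← sum_sum_sq_restrictLink hdc, mul_sum, ← sum_sub_distrib]
  refine sum_congr rfl fun τ hτ => ?_
  rw [linkEnergy_eq, mul_sum]
  congr 1
  refine sum_congr rfl fun v _ => ?_
  rw [restrictLink_eq]
  by_cases hv : v ∈ τ
  · simp [hv]
  by_cases hX : insert v τ ∈ X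
  · have hcard : (insert v τ).card = n + 1 := by rw [card_insert_of_notMem hv, (mem_filter.1 hτ).2]
    rw [degree_linkGraph' X τ hv, hreg _ hX hcard]
  · simp [φ.extend_of_notMem hX]

end Garland

end BCC

theorem garland_identity_general {V : Type} [Fintype V] [LinearOrder V]
    (X : Finset (Finset V)) (hdc : ∀ s ∈ X, ∀ t ⊆ s, t ∈ X)
    (k j : ℕ) (hkj : k = j + 1)
    (m : ℕ)
    (hdeg : ∀ σ ∈ X, σ.card = k → (X.filter fun η => σ ⊆ η ∧ η.card = k + 1).card = m)
    (φ : Cochain X (j + 1)) :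
    normSq (d X (j + 1) φ) =
      (∑ τ ∈ X.filter (fun τ => τ.card = j), linkEnergy X τ (restrictLink X φ τ))
        - m * ((k : ℝ) - 1) * normSq φ := by
  subst hkj
  have hreg : ∀ σ ∈ X, σ.card = j + 1 → (linkVerts X σ).card = m := fun σ hσ hc => by
    rw [card_linkVerts, hc, hdeg σ hσ hc]
  rw [normSq_d_eq hdc hreg, sum_linkEnergy_restrictLink hdc hreg]
  push_cast
  ring

/-- **Claim 7 (Garland's local-to-global identity).**  Let `X` be a finite pure
`k`-dimensional simplicial complex (`k = j+1 ≥ 1`) in which every `(k-1)`-simplex is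
contained in exactly `m` `k`-simplices.  Then for every `φ ∈ C^{k-1}(X)`:
`‖d_{k-1}φ‖² = ∑_{τ ∈ X(k-2)} ‖d₀ φ_τ‖²_{lk(X,τ)} - m(k-1)·‖φ‖²`,
where `φ_τ(v) = φ(vτ)`. -/
theorem garland_identity {V : Type} [Fintype V] [LinearOrder V]
    (X : Finset (Finset V)) (hdc : ∀ s ∈ X, ∀ t ⊆ s, t ∈ X)
    (k j : ℕ) (hkj : k = j + 1)
    (hpure : ∀ s ∈ X, ∃ t ∈ X, s ⊆ t ∧ t.card = k + 1)
    (m : ℕ)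
    (hdeg : ∀ σ ∈ X, σ.card = k → (X.filter fun η => σ ⊆ η ∧ η.card = k + 1).card = m)
    (φ : Cochain X (j + 1)) :
    normSq (d X (j + 1) φ) =
      (∑ τ ∈ X.filter (fun τ => τ.card = j), linkEnergy X τ (restrictLink X φ τ))
        - m * ((k : ℝ) - 1) * normSq φ :=
  garland_identity_general X hdc k j hkj m hdeg φ
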